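/- Let P be a symmetric positive semidefinite n×n real matrix, V a symmetric positive semidefinite m×m real matrix, and B an m×n real matrix such that S = B P Bᵀ + V is positive definite (hence invertible). Define J : ℝ^{n×m} → ℝ by J(K) = trace((I − K B) P (I − K B)ᵀ + K V Kᵀ) and K* = P Bᵀ S⁻¹. Then for every n×m matrix K, J(K) = J(K*) + trace((K − K*) S (K − K*)ᵀ); consequently J(K) ≥ J(K*) for all K, with equality if and only if K = K*. Thus K* is the unique global minimizer of the sum of squared errors among all gain matrices. -/

import Mathlib

open Matrix

/-!
Completing the square: expanding the cost gives
`J(K) = tr P + tr (K S Kᵀ - K (P Bᵀ)ᵀ - P Bᵀ Kᵀ)` with `S = B P Bᵀ + V`, and since `K* S = P Bᵀ`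
this equals `tr (P - K* (P Bᵀ)ᵀ) + tr ((K - K*) S (K - K*)ᵀ)`. The last trace is the sum, over
the rows `r` of `K - K*`, of the quadratic forms `r ⬝ S r`, so it is nonnegative and vanishes
only when `K = K*`.
-/

/-- The posterior error cost `J(K) = trace((I − K B) P (I − K B)ᵀ + K V Kᵀ)`. -/
noncomputable def kalmanCost {n m : ℕ} (P : Matrix (Fin n) (Fin n) ℝ)
    (V : Matrix (Fin m) (Fin m) ℝ) (B : Matrix (Fin m) (Fin n) ℝ)
    (K : Matrix (Fin n) (Fin m) ℝ) : ℝ :=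
  Matrix.trace ((1 - K * B) * P * (1 - K * B)ᵀ + K * V * Kᵀ)

/-- The Kalman gain `K* = P Bᵀ (B P Bᵀ + V)⁻¹`. -/
noncomputable def kalmanGain {n m : ℕ} (P : Matrix (Fin n) (Fin n) ℝ)
    (V : Matrix (Fin m) (Fin m) ℝ) (B : Matrix (Fin m) (Fin n) ℝ) :
    Matrix (Fin n) (Fin m) ℝ :=
  P * Bᵀ * (B * P * Bᵀ + V)⁻¹

namespace Matrix

theorem IsSymm.mul_mul_transpose_sub_sub {κ ι R : Type*} [Fintype κ] [DecidableEq κ]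
    [CommRing R] {S : Matrix κ κ R} (hS : S.IsSymm) (hdet : IsUnit S.det)
    (K C : Matrix ι κ R) :
    K * S * Kᵀ - K * Cᵀ - C * Kᵀ = (K - C * S⁻¹) * S * (K - C * S⁻¹)ᵀ - C * S⁻¹ * Cᵀ := by
  have hGS : C * S⁻¹ * S = C := by rw [Matrix.mul_assoc, nonsing_inv_mul S hdet, Matrix.mul_one]
  have hGt : (C * S⁻¹)ᵀ = S⁻¹ * Cᵀ := by rw [transpose_mul, transpose_nonsing_inv, hS.eq]
  have hSG : S * (C * S⁻¹)ᵀ = Cᵀ := by rw [← hS.eq, ← transpose_mul, hS.eq, hGS]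
  simp only [transpose_sub, Matrix.sub_mul, Matrix.mul_sub, hGS, Matrix.mul_assoc K S, hSG]
  rw [hGt, Matrix.mul_assoc C]
  abel

theorem mul_mul_conjTranspose_apply_self {κ ι R : Type*} [Fintype κ] [CommSemiring R]
    [StarRing R] (S : Matrix κ κ R) (A : Matrix ι κ R) (i : ι) :
    (A * S * Aᴴ) i i = A i ⬝ᵥ (S *ᵥ star (A i)) := by
  rw [mul_apply, dotProduct_mulVec]
  rfl

open scoped ComplexOrder in
theorem PosDef.trace_mul_mul_conjTranspose_eq_zero_iff {κ ι 𝕜 : Type*} [Fintype κ] [Fintype ι]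
    [RCLike 𝕜] {S : Matrix κ κ 𝕜} (hS : S.PosDef) {A : Matrix ι κ 𝕜} :
    (A * S * Aᴴ).trace = 0 ↔ A = 0 := by
  rw [(hS.posSemidef.mul_mul_conjTranspose_same A).trace_eq_zero_iff]
  refine ⟨fun h => ?_, fun h => by simp [h]⟩
  ext i j
  by_contra hne
  have hrow : star (A i) ≠ 0 := fun h0 => hne (by simpa using congrFun h0 j)
  have hpos := hS.dotProduct_mulVec_pos hrow
  rw [star_star, ← mul_mul_conjTranspose_apply_self, h] at hpos
  exact hpos.ne' rfl

end Matrix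

section Kalman

variable {n m : ℕ} (P : Matrix (Fin n) (Fin n) ℝ) (V : Matrix (Fin m) (Fin m) ℝ)
  (B : Matrix (Fin m) (Fin n) ℝ)

theorem kalmanCost_eq_trace (hP : P.IsSymm) (K : Matrix (Fin n) (Fin m) ℝ) :
    kalmanCost P V B K =
      (P + (K * (B * P * Bᵀ + V) * Kᵀ - K * (P * Bᵀ)ᵀ - P * Bᵀ * Kᵀ)).trace := by
  rw [kalmanCost]
  congr 1
  simp only [transpose_sub, transpose_one, transpose_mul, transpose_transpose, hP.eq,
    Matrix.sub_mul, Matrix.mul_sub, Matrix.add_mul, Matrix.mul_add, Matrix.mul_one,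
    Matrix.one_mul, Matrix.mul_assoc]
  abel

theorem kalmanCost_eq_kalmanCost_kalmanGain_add (hP : P.IsSymm)
    (hS : (B * P * Bᵀ + V).IsSymm) (hdet : IsUnit (B * P * Bᵀ + V).det)
    (K : Matrix (Fin n) (Fin m) ℝ) :
    kalmanCost P V B K = kalmanCost P V B (kalmanGain P V B) +
      ((K - kalmanGain P V B) * (B * P * Bᵀ + V) * (K - kalmanGain P V B)ᵀ).trace := by
  have hsplit : ∀ K, kalmanCost P V B K = (P - kalmanGain P V B * (P * Bᵀ)ᵀ).trace +
      ((K - kalmanGain P V B) * (B * P * Bᵀ + V) * (K - kalmanGain P V B)ᵀ).trace := by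
    intro K
    rw [kalmanCost_eq_trace P V B hP, hS.mul_mul_transpose_sub_sub hdet, kalmanGain,
      ← trace_add]
    congr 1
    abel
  rw [hsplit K, hsplit (kalmanGain P V B), sub_self, Matrix.zero_mul, Matrix.zero_mul,
    trace_zero, add_zero]

end Kalman

theorem kalmanGain_unique_minimizer_general {n m : ℕ}
    (P : Matrix (Fin n) (Fin n) ℝ) (V : Matrix (Fin m) (Fin m) ℝ)
    (B : Matrix (Fin m) (Fin n) ℝ)
    (hP : P.PosSemidef)
    (hS : (B * P * Bᵀ + V).PosDef) :
    ∀ K : Matrix (Fin n) (Fin m) ℝ,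
      kalmanCost P V B K = kalmanCost P V B (kalmanGain P V B) +
        Matrix.trace ((K - kalmanGain P V B) * (B * P * Bᵀ + V) *
          (K - kalmanGain P V B)ᵀ) ∧
      kalmanCost P V B (kalmanGain P V B) ≤ kalmanCost P V B K ∧
      (kalmanCost P V B K = kalmanCost P V B (kalmanGain P V B) ↔
        K = kalmanGain P V B) := by
  intro K
  have hcost := kalmanCost_eq_kalmanCost_kalmanGain_add P V B
    (isHermitian_iff_isSymm.mp hP.isHermitian) (isHermitian_iff_isSymm.mp hS.isHermitian)
    hS.det_pos.ne'.isUnit K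
  have hD : (K - kalmanGain P V B)ᵀ = (K - kalmanGain P V B)ᴴ :=
    (conjTranspose_eq_transpose_of_trivial _).symm
  have hnonneg :
      0 ≤ ((K - kalmanGain P V B) * (B * P * Bᵀ + V) * (K - kalmanGain P V B)ᵀ).trace := by
    rw [hD]
    exact (hS.posSemidef.mul_mul_conjTranspose_same _).trace_nonneg
  refine ⟨hcost, by linarith, ?_⟩
  rw [hcost, add_eq_left, hD, hS.trace_mul_mul_conjTranspose_eq_zero_iff, sub_eq_zero]

/-- **The Kalman gain is the unique global minimizer of the sum of squared errors.**
For `P`, `V` positive semidefinite with `S = B P Bᵀ + V` positive definite,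
`J(K) = J(K*) + trace((K − K*) S (K − K*)ᵀ)` for every `K`, hence `J(K*) ≤ J(K)`
with equality iff `K = K*`. -/
theorem kalmanGain_unique_minimizer {n m : ℕ}
    (P : Matrix (Fin n) (Fin n) ℝ) (V : Matrix (Fin m) (Fin m) ℝ)
    (B : Matrix (Fin m) (Fin n) ℝ)
    (hP : P.PosSemidef) (hV : V.PosSemidef)
    (hS : (B * P * Bᵀ + V).PosDef) :
    ∀ K : Matrix (Fin n) (Fin m) ℝ,
      kalmanCost P V B K = kalmanCost P V B (kalmanGain P V B) +
        Matrix.trace ((K - kalmanGain P V B) * (B * P * Bᵀ + V) *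
          (K - kalmanGain P V B)ᵀ) ∧
      kalmanCost P V B (kalmanGain P V B) ≤ kalmanCost P V B K ∧
      (kalmanCost P V B K = kalmanCost P V B (kalmanGain P V B) ↔
        K = kalmanGain P V B) :=
  kalmanGain_unique_minimizer_general P V B hP hS
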